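/- arXiv:2603.25303 — 4 statements merged into one kernel-verified Lean document; each statement's English description precedes it below -/
import Mathlib

section
/- Let a > 0, n ≥ 2 an integer, and define ζ_a(s) = −1/2 + (s + 2a)/(2√(s² + 4as)). If s > a·(√n − 1)²/√n, then (n − 1)·ζ_a(s) < 1. -/
/-!
Put `t = √n`, `m = s + 2a` and `b = 2a`, so that `s² + 4as = m² - b²` and `n ∓ 1 = t² ∓ 1`.
Clearing denominators, the claim becomes `(t² - 1) m < (t² + 1) √(m² - b²)`. Since
`(t² + 1)² - (t² - 1)² = (2t)²`, after squaring this is `(t² + 1) b < 2t m`, which is the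
hypothesis on `s` multiplied out.
-/

lemma mul_lt_mul_sqrt_sq_sub_sq {m b t : ℝ} (hb : 0 ≤ b)
    (h : (t ^ 2 + 1) * b < 2 * t * m) :
    (t ^ 2 - 1) * m < (t ^ 2 + 1) * √(m ^ 2 - b ^ 2) := by
  have hsq : ((t ^ 2 + 1) * b) ^ 2 < (2 * t * m) ^ 2 :=
    pow_lt_pow_left₀ h (by positivity) two_ne_zero
  rw [← Real.sqrt_sq (by positivity : 0 ≤ t ^ 2 + 1), ← Real.sqrt_mul (by positivity)]
  exact Real.lt_sqrt_of_sq_lt (by nlinarith)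

lemma mul_neg_half_add_div_lt_one {c p R : ℝ} (hR : 0 < R) (h : c * p < (c + 2) * R) :
    c * (-1 / 2 + p / (2 * R)) < 1 := by
  have hrw : c * (-1 / 2 + p / (2 * R)) = (c * p - c * R) / (2 * R) := by
    field_simp
    ring
  rw [hrw, div_lt_one (by positivity)]
  linarith

lemma sq_add_one_mul_lt_of_mul_sub_one_sq_div_lt {a s t : ℝ} (ht : 0 < t)
    (hs : a * (t - 1) ^ 2 / t < s) :
    (t ^ 2 + 1) * (2 * a) < 2 * t * (s + 2 * a) := by
  rw [div_lt_iff₀ ht] at hs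
  linarith

theorem stmt_3 (a s : ℝ) (n : ℕ) (ha : 0 < a) (hn : 2 ≤ n)
    (hs : a * (Real.sqrt n - 1)^2 / Real.sqrt n < s) :
    (n - 1 : ℝ) * (-1/2 + (s + 2*a) / (2 * Real.sqrt (s^2 + 4*a*s))) < 1 := by
  set t := √(n : ℝ)
  have ht : 0 < t := Real.sqrt_pos.mpr (Nat.cast_pos.mpr (by omega))
  have htn : t ^ 2 = n := Real.sq_sqrt (Nat.cast_nonneg n)
  have hs_pos : 0 < s := (div_nonneg (by positivity) ht.le).trans_lt hs
  have hdisc : s ^ 2 + 4 * a * s = (s + 2 * a) ^ 2 - (2 * a) ^ 2 := by ring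
  apply mul_neg_half_add_div_lt_one (Real.sqrt_pos.mpr (by positivity))
  have key := mul_lt_mul_sqrt_sq_sub_sq (by positivity)
    (sq_add_one_mul_lt_of_mul_sub_one_sq_div_lt ht hs)
  rw [htn, ← hdisc] at key
  linarith
end

section
/- Let n ≥ 2, a > 0, ε > 0, δ ≥ 0, and suppose ε > ((√n − 1)²/√n · a − δ)/(n − 1). Define T: ℝⁿ → ℝⁿ by T_i(z) = BR(δ + Σ_{j≠i} z_j) where BR(s) = (−s + √(s² + 4as))/2. Then T is a contraction on the set {z ∈ ℝⁿ : z_i ≥ ε for all i} with respect to the supremum norm; i.e., there exists ρ ∈ (0,1) such that ‖T(z) − T(z')‖_∞ ≤ ρ‖z − z'‖_∞ for all z, z' in this set. -/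
/-- Unconstrained best response in the Kelly game with logarithmic valuation. -/
noncomputable def kellyBR (a s : ℝ) : ℝ := (-s + Real.sqrt (s^2 + 4*a*s)) / 2

/-!
The best response `BR = kellyBR a` has derivative `ζ_a = kellyBRDeriv a`, which is positive and
decreasing on `(0, ∞)`, so by the mean value theorem `BR` is `ζ_a(s₀)`-Lipschitz on `[s₀, ∞)`.
On `{z | ∀ i, ε ≤ z i}` every argument `δ + ∑_{j ≠ i} z j` is at least `s₀ = δ + (n - 1) ε` and
moves by at most `(n - 1) ‖z - z'‖`, so `T` is Lipschitz with constant `ρ = (n - 1) ζ_a(s₀) > 0`.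
Finally `ρ < 1` amounts to `a² (n - 1)² < n (s₀² + 4 a s₀)`, a quadratic condition in `s₀` whose
positive root is `a (√n - 1)² / √n`.
-/

open Finset

noncomputable def kellyBRDeriv (a s : ℝ) : ℝ := -1/2 + (s + 2*a) / (2 * Real.sqrt (s^2 + 4*a*s))

section
variable {a s : ℝ}

theorem hasDerivAt_kellyBR (ha : 0 ≤ a) (hs : 0 < s) :
    HasDerivAt (kellyBR a) (kellyBRDeriv a s) s := by
  have hq : HasDerivAt (fun x => x^2 + 4*a*x) (2*s + 4*a) s := by
    simpa using (hasDerivAt_pow 2 s).fun_add ((hasDerivAt_id' s).const_mul (4*a))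
  refine (((hasDerivAt_id' s).fun_neg.fun_add (hq.sqrt ?_)).div_const 2).congr_deriv ?_
  · positivity
  have : Real.sqrt (s^2 + 4*a*s) ≠ 0 := by positivity
  rw [kellyBRDeriv]
  field_simp
  ring

theorem kellyBRDeriv_eq (ha : 0 ≤ a) (hs : 0 < s) :
    kellyBRDeriv a s = (Real.sqrt (1 + 4*a^2 / (s^2 + 4*a*s)) - 1) / 2 := by
  have hA : 0 < s^2 + 4*a*s := by positivity
  have h : Real.sqrt (1 + 4*a^2 / (s^2 + 4*a*s)) = (s + 2*a) / Real.sqrt (s^2 + 4*a*s) := by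
    rw [eq_div_iff (by positivity), ← Real.sqrt_mul (by positivity), Real.sqrt_eq_iff_mul_self_eq]
    · field_simp; ring
    · positivity
    · positivity
  rw [h, kellyBRDeriv]
  ring

theorem kellyBRDeriv_nonneg (ha : 0 ≤ a) (hs : 0 < s) : 0 ≤ kellyBRDeriv a s := by
  rw [kellyBRDeriv_eq ha hs, sub_div, sub_nonneg, div_le_div_iff_of_pos_right two_pos,
    Real.le_sqrt' one_pos, one_pow, le_add_iff_nonneg_right]
  positivity

theorem kellyBRDeriv_pos (ha : 0 < a) (hs : 0 < s) : 0 < kellyBRDeriv a s := by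
  rw [kellyBRDeriv_eq ha.le hs, sub_div, sub_pos, div_lt_div_iff_of_pos_right two_pos,
    Real.lt_sqrt zero_le_one, one_pow, lt_add_iff_pos_right]
  positivity

theorem kellyBRDeriv_antitoneOn (ha : 0 ≤ a) : AntitoneOn (kellyBRDeriv a) (Set.Ioi 0) := by
  intro s (hs : 0 < s) t (ht : 0 < t) hst
  rw [kellyBRDeriv_eq ha hs, kellyBRDeriv_eq ha ht]
  gcongr

theorem abs_kellyBR_sub_le {s₀ t : ℝ} (ha : 0 ≤ a) (hs₀ : 0 < s₀) (hs : s₀ ≤ s) (ht : s₀ ≤ t) :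
    |kellyBR a s - kellyBR a t| ≤ kellyBRDeriv a s₀ * |s - t| := by
  have hderiv : ∀ x ∈ Set.Ici s₀, HasDerivWithinAt (kellyBR a) (kellyBRDeriv a x) (Set.Ici s₀) x :=
    fun x hx => (hasDerivAt_kellyBR ha (hs₀.trans_le hx)).hasDerivWithinAt
  have hbound : ∀ x ∈ Set.Ici s₀, ‖kellyBRDeriv a x‖ ≤ kellyBRDeriv a s₀ := fun x hx => by
    have hx₀ : 0 < x := hs₀.trans_le hx
    rw [Real.norm_of_nonneg (kellyBRDeriv_nonneg ha hx₀)]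
    exact kellyBRDeriv_antitoneOn ha hs₀ hx₀ hx
  exact (convex_Ici s₀).norm_image_sub_le_of_norm_hasDerivWithin_le hderiv hbound ht hs

theorem mul_kellyBRDeriv_lt_one {c : ℝ} (ha : 0 ≤ a) (hc : 1 < c)
    (hs : a * (Real.sqrt c - 1)^2 / Real.sqrt c < s) : (c - 1) * kellyBRDeriv a s < 1 := by
  obtain ⟨r, hr1, rfl⟩ : ∃ r, 1 < r ∧ c = r^2 :=
    ⟨Real.sqrt c, by simpa using Real.sqrt_lt_sqrt zero_le_one hc,
      (Real.sq_sqrt (by linarith)).symm⟩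
  rw [Real.sqrt_sq (by linarith)] at hs
  have hr : 0 < r := by linarith
  have hs₀ : 0 < s := lt_of_le_of_lt (by positivity) hs
  set A := s^2 + 4*a*s
  have hA : 0 < A := by positivity
  -- `r² A - a²(r² - 1)²` factors as `(rs - a(r - 1)²)(rs + a(r + 1)²)`
  have hkey : a^2 * (r^2 - 1)^2 < r^2 * A := by
    rw [div_lt_iff₀ hr] at hs
    nlinarith [mul_pos (sub_pos.2 hs) (by positivity : 0 < r * s + a * (r + 1)^2)]
  set q := Real.sqrt (1 + 4*a^2 / A)
  have hq : q^2 = 1 + 4*a^2 / A := Real.sq_sqrt (by positivity)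
  have hsq : ((r^2 - 1) * q)^2 < (r^2 + 1)^2 := by
    have : (r^2 - 1)^2 * (4*a^2 / A) < 4 * r^2 := by
      rw [mul_div_assoc', div_lt_iff₀ hA]; linarith
    rw [mul_pow, hq]; linear_combination this
  have := lt_of_pow_lt_pow_left₀ 2 (by positivity) hsq
  rw [kellyBRDeriv_eq ha hs₀]
  linarith

end

section
variable {ι : Type*} [Fintype ι] [DecidableEq ι]

theorem cast_card_univ_erase (i : ι) : ((univ.erase i).card : ℝ) = Fintype.card ι - 1 := by
  rw [card_erase_of_mem (mem_univ i), card_univ, Nat.cast_sub (Fintype.card_pos_iff.2 ⟨i⟩),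
    Nat.cast_one]

theorem card_sub_one_mul_le_sum_univ_erase {ε : ℝ} {z : ι → ℝ} (hz : ∀ j, ε ≤ z j) (i : ι) :
    (Fintype.card ι - 1) * ε ≤ ∑ j ∈ univ.erase i, z j := by
  rw [← cast_card_univ_erase i, ← nsmul_eq_mul, ← sum_const]
  exact sum_le_sum fun j _ => hz j

theorem abs_sum_univ_erase_sub_le (z z' : ι → ℝ) (i : ι) :
    |∑ j ∈ univ.erase i, z j - ∑ j ∈ univ.erase i, z' j| ≤ (Fintype.card ι - 1) * ‖z - z'‖ := by
  rw [← sum_sub_distrib, ← cast_card_univ_erase i, ← nsmul_eq_mul, ← sum_const]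
  refine (abs_sum_le_sum_abs _ _).trans (sum_le_sum fun j _ => ?_)
  simpa only [Pi.sub_apply, Real.norm_eq_abs] using norm_le_pi_norm (z - z') j

end

theorem stmt_5_general (n : ℕ) (a ε δ : ℝ) (hn : 2 ≤ n) (ha : 0 < a)
    (hcond : ((Real.sqrt n - 1)^2 / Real.sqrt n * a - δ) / (n - 1) < ε) :
    let T : (Fin n → ℝ) → (Fin n → ℝ) :=
      fun z i => kellyBR a (δ + ∑ j ∈ Finset.univ.erase i, z j)
    ∃ ρ ∈ Set.Ioo (0 : ℝ) 1,
      ∀ z z' : Fin n → ℝ, (∀ i, ε ≤ z i) → (∀ i, ε ≤ z' i) →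
        ‖T z - T z'‖ ≤ ρ * ‖z - z'‖ := by
  intro T
  have hn1 : (1 : ℝ) < n := by exact_mod_cast hn
  set s₀ := δ + ((n : ℝ) - 1) * ε with hs₀_def
  have hs₀ : a * (Real.sqrt n - 1)^2 / Real.sqrt n < s₀ := by
    rw [div_lt_iff₀ (by linarith)] at hcond
    linarith [show (Real.sqrt n - 1)^2 / Real.sqrt n * a = a * (Real.sqrt n - 1)^2 / Real.sqrt n
      by ring]
  have hs₀_pos : 0 < s₀ := lt_of_le_of_lt (by positivity) hs₀
  have hρ_pos : 0 < ((n : ℝ) - 1) * kellyBRDeriv a s₀ :=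
    mul_pos (by linarith) (kellyBRDeriv_pos ha hs₀_pos)
  refine ⟨_, ⟨hρ_pos, mul_kellyBRDeriv_lt_one ha.le hn1 hs₀⟩, fun z z' hz hz' => ?_⟩
  have hlow : ∀ w : Fin n → ℝ, (∀ j, ε ≤ w j) → ∀ i, s₀ ≤ δ + ∑ j ∈ univ.erase i, w j :=
    fun w hw i => by
      have := card_sub_one_mul_le_sum_univ_erase hw i
      rw [Fintype.card_fin] at this
      linarith
  refine (pi_norm_le_iff_of_nonneg (by positivity)).2 fun i => ?_
  calc ‖T z i - T z' i‖
      ≤ kellyBRDeriv a s₀ * |(δ + ∑ j ∈ univ.erase i, z j) - (δ + ∑ j ∈ univ.erase i, z' j)| :=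
        abs_kellyBR_sub_le ha.le hs₀_pos (hlow z hz i) (hlow z' hz' i)
    _ ≤ kellyBRDeriv a s₀ * ((n - 1) * ‖z - z'‖) := by
        rw [add_sub_add_left_eq_sub]
        gcongr
        · exact kellyBRDeriv_nonneg ha.le hs₀_pos
        · simpa using abs_sum_univ_erase_sub_le z z' i
    _ = ((n : ℝ) - 1) * kellyBRDeriv a s₀ * ‖z - z'‖ := by ring

theorem stmt_5 (n : ℕ) (a ε δ : ℝ) (hn : 2 ≤ n) (ha : 0 < a) (hε : 0 < ε)
    (hδ : 0 ≤ δ)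
    (hcond : ((Real.sqrt n - 1)^2 / Real.sqrt n * a - δ) / (n - 1) < ε) :
    let T : (Fin n → ℝ) → (Fin n → ℝ) :=
      fun z i => kellyBR a (δ + ∑ j ∈ Finset.univ.erase i, z j)
    ∃ ρ ∈ Set.Ioo (0 : ℝ) 1,
      ∀ z z' : Fin n → ℝ, (∀ i, ε ≤ z i) → (∀ i, ε ≤ z' i) →
        ‖T z - T z'‖ ≤ ρ * ‖z - z'‖ :=
  stmt_5_general n a ε δ hn ha hcond
end

section
/- Let n ≥ 1, and for each i let k_i > 0, r_i > 0, g_i ∈ ℝ. Consider the n×n symmetric matrix H with entries H_{ii} = −2 r_i k_i and H_{ij} = r_i g_i + r_j g_j for i ≠ j, which can be written H = −2Λ(k⊙r) + (g⊙r)𝟙ᵀ + 𝟙(g⊙r)ᵀ. If (Σ_i r_i g_i²/k_i)·(Σ_i 1/(r_i k_i)) < 1, then H is negative definite. -/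
/-!
Bounding each entry of the quadratic form by absolute values gives
`vᵀ H v ≤ 2 (∑ |r g| |v|) (∑ |v|) - 2 ∑ r k v²`. Writing `K = ∑ r k v²`, Cauchy–Schwarz with the
weights `r k` gives `(∑ |r g| |v|)² ≤ K ∑ r g² / k` and `(∑ |v|)² ≤ K ∑ 1 / (r k)`, so the
hypothesis makes the product of the two sums smaller than `K`.
-/

open Matrix Finset

theorem dotProduct_mulVec_diag_offDiag_add_le {ι : Type*} [Fintype ι] [DecidableEq ι]
    (d u v : ι → ℝ) :
    v ⬝ᵥ (of fun i j => if i = j then d i else u i + u j) *ᵥ v ≤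
      2 * ((∑ i, |u i| * |v i|) * ∑ i, |v i|) + ∑ i, d i * v i ^ 2 := by
  have hterm : ∀ i j, v i * ((if i = j then d i else u i + u j) * v j) ≤
      |u i| * |v i| * |v j| + |v i| * (|u j| * |v j|) + if i = j then d i * v i ^ 2 else 0 := by
    intro i j
    by_cases hij : i = j
    · subst hij
      rw [if_pos rfl, if_pos rfl]
      nlinarith [abs_nonneg (u i), sq_abs (v i), abs_nonneg (v i)]
    · simp only [if_neg hij, add_zero]
      calc v i * ((u i + u j) * v j) ≤ |v i| * (|u i + u j| * |v j|) := by
            rw [← abs_mul, ← abs_mul]; exact le_abs_self _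
        _ ≤ |v i| * ((|u i| + |u j|) * |v j|) := by gcongr; exact abs_add_le _ _
        _ = _ := by ring
  calc v ⬝ᵥ (of fun i j => if i = j then d i else u i + u j) *ᵥ v
      = ∑ i, ∑ j, v i * ((if i = j then d i else u i + u j) * v j) := by
        simp only [dotProduct, mulVec, of_apply, mul_sum]
    _ ≤ ∑ i, ∑ j, (|u i| * |v i| * |v j| + |v i| * (|u j| * |v j|) +
          if i = j then d i * v i ^ 2 else 0) := by gcongr with i _ j _; exact hterm i j
    _ = 2 * ((∑ i, |u i| * |v i|) * ∑ i, |v i|) + ∑ i, d i * v i ^ 2 := by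
        simp only [sum_add_distrib, sum_ite_eq, mem_univ, if_true, ← sum_mul_sum]
        ring

theorem mul_lt_of_sq_le_mul_of_sq_le {x y K A B : ℝ} (hK : 0 < K) (hx : x ^ 2 ≤ K * A)
    (hy : y ^ 2 ≤ K * B) (hAB : A * B < 1) : x * y < K := by
  have hsq : (x * y) ^ 2 < K ^ 2 :=
    calc (x * y) ^ 2 = x ^ 2 * y ^ 2 := mul_pow x y 2
      _ ≤ (K * A) * (K * B) := mul_le_mul hx hy (sq_nonneg y) ((sq_nonneg x).trans hx)
      _ = K ^ 2 * (A * B) := by ring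
      _ < K ^ 2 := mul_lt_of_lt_one_right (by positivity) hAB
  exact (abs_lt.mp (abs_lt_of_sq_lt_sq hsq hK.le)).2

theorem stmt_8_general (n : ℕ) (k r g : Fin n → ℝ)
    (hk : ∀ i, 0 < k i) (hr : ∀ i, 0 < r i)
    (hcond : (∑ i, r i * (g i)^2 / k i) * (∑ i, 1 / (r i * k i)) < 1) :
    let H : Matrix (Fin n) (Fin n) ℝ :=
      Matrix.of fun i j => if i = j then -2 * r i * k i else r i * g i + r j * g j
    ∀ v : Fin n → ℝ, v ≠ 0 → v ⬝ᵥ H.mulVec v < 0 := by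
  intro H v hv
  have hrk : ∀ i, 0 < r i * k i := fun i => mul_pos (hr i) (hk i)
  set K := ∑ i, r i * k i * v i ^ 2
  have hK : 0 < K := by
    obtain ⟨i, hi⟩ := Function.ne_iff.mp hv
    exact sum_pos' (fun j _ => by have := hrk j; positivity)
      ⟨i, mem_univ i, mul_pos (hrk i) (pow_pos (abs_pos.mpr hi) 2 |>.trans_eq (sq_abs _))⟩
  have hcs_g : (∑ i, |r i * g i| * |v i|) ^ 2 ≤ K * ∑ i, r i * g i ^ 2 / k i :=
    sum_sq_le_sum_mul_sum_of_sq_le_mul _ (fun i _ => by have := hrk i; positivity)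
      (fun i _ => by have := hr i; have := hk i; positivity) fun i _ => le_of_eq <| by
        have := (hk i).ne'
        rw [mul_pow, sq_abs, sq_abs]; field_simp
  have hcs_one : (∑ i, |v i|) ^ 2 ≤ K * ∑ i, 1 / (r i * k i) :=
    sum_sq_le_sum_mul_sum_of_sq_le_mul _ (fun i _ => by have := hrk i; positivity)
      (fun i _ => by have := hrk i; positivity) fun i _ => le_of_eq <| by
        rw [sq_abs, mul_one_div, mul_div_cancel_left₀ _ (hrk i).ne']
  have hdiag : ∑ i, -2 * r i * k i * v i ^ 2 = -2 * K := by
    rw [mul_sum]; exact sum_congr rfl fun i _ => by ring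
  calc v ⬝ᵥ H *ᵥ v
      ≤ 2 * ((∑ i, |r i * g i| * |v i|) * ∑ i, |v i|) + ∑ i, -2 * r i * k i * v i ^ 2 :=
        dotProduct_mulVec_diag_offDiag_add_le _ _ v
    _ < 0 := by linarith [mul_lt_of_sq_le_mul_of_sq_le hK hcs_g hcs_one hcond]

theorem stmt_8 (n : ℕ) (hn : 1 ≤ n) (k r g : Fin n → ℝ)
    (hk : ∀ i, 0 < k i) (hr : ∀ i, 0 < r i)
    (hcond : (∑ i, r i * (g i)^2 / k i) * (∑ i, 1 / (r i * k i)) < 1) :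
    let H : Matrix (Fin n) (Fin n) ℝ :=
      Matrix.of fun i j => if i = j then -2 * r i * k i else r i * g i + r j * g j
    ∀ v : Fin n → ℝ, v ≠ 0 → v ⬝ᵥ H.mulVec v < 0 :=
  stmt_8_general n k r g hk hr hcond
end

section
/- Let G be a game with n players, each with a compact convex strategy set R_i ⊂ ℝ and payoff φ_i concave in its own variable, and suppose the symmetrized pseudo-Hessian H_r(z) with entries (H_r(z))_{ij} = r_i ∂²φ_i/∂z_i∂z_j + r_j ∂²φ_j/∂z_j∂z_i is negative definite for all z in the joint strategy set, for some vector r with r_i > 0. Then G has at most one Nash equilibrium. -/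
/-!
Write `g i z = r i * ∂ᵢφᵢ(z)` for the weighted pseudogradient. At a Nash equilibrium `z` each
player's first-order condition on the convex set `R i` gives `∑ i, g i z * (y i - z i) ≤ 0` for
every feasible `y`. Along the segment from `x` to `y`, the derivative of
`s ↦ ∑ i, g i (x + s • (y - x)) * (y i - x i)` is half the quadratic form of `H_r` in the
direction `y - x`, hence negative; by the mean value theorem
`∑ i, (g i y - g i x) * (y i - x i) < 0` whenever `x ≠ y`. Adding the first-order conditions of
two equilibria contradicts this unless they coincide.
-/

/-- Nash equilibrium of a game with one-dimensional strategy sets. -/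
def IsNashEq {n : ℕ} (R : Fin n → Set ℝ) (φ : Fin n → (Fin n → ℝ) → ℝ)
    (z : Fin n → ℝ) : Prop :=
  (∀ i, z i ∈ R i) ∧
  ∀ i, ∀ t ∈ R i, φ i (Function.update z i t) ≤ φ i z

open Set Function Finset

section Pseudogradient

variable {ι : Type*} [Fintype ι]

/-- Rosen's diagonal strict concavity, stated for the weighted pseudogradient `g`. -/
def DiagStrictConcaveOn (S : Set (ι → ℝ)) (g : ι → (ι → ℝ) → ℝ) : Prop :=
  ∀ x ∈ S, ∀ y ∈ S, x ≠ y → ∑ i, (g i y - g i x) * (y i - x i) < 0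

theorem DiagStrictConcaveOn.eq_of_sum_mul_sub_nonpos {S : Set (ι → ℝ)} {g : ι → (ι → ℝ) → ℝ}
    (hg : DiagStrictConcaveOn S g) {x y : ι → ℝ} (hx : x ∈ S) (hy : y ∈ S)
    (hxy : ∑ i, g i x * (y i - x i) ≤ 0) (hyx : ∑ i, g i y * (x i - y i) ≤ 0) : x = y := by
  by_contra hne
  have hsplit : ∑ i, (g i y - g i x) * (y i - x i)
      = -(∑ i, g i x * (y i - x i) + ∑ i, g i y * (x i - y i)) := by
    rw [← sum_add_distrib, ← sum_neg_distrib]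
    exact sum_congr rfl fun i _ => by ring
  linarith [hg x hx y hy hne]

theorem sum_sum_mul_add_transpose_mul (A : ι → ι → ℝ) (v : ι → ℝ) :
    ∑ i, ∑ j, v i * (A i j + A j i) * v j = 2 * ∑ i, (∑ j, v j * A i j) * v i := by
  have hswap : ∑ i, ∑ j, v i * A j i * v j = ∑ i, ∑ j, v j * A i j * v i := sum_comm
  simp only [mul_add, add_mul, sum_add_distrib, hswap, sum_mul, two_mul]
  congr 1
  exact sum_congr rfl fun i _ => sum_congr rfl fun j _ => by ring

variable [DecidableEq ι]

theorem ContinuousLinearMap.apply_eq_sum_mul_apply_single (L : (ι → ℝ) →L[ℝ] ℝ) (v : ι → ℝ) :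
    L v = ∑ j, v j * L (Pi.single j 1) := by
  conv_lhs => rw [pi_eq_sum_univ' v]
  simp [map_sum]

theorem diagStrictConcaveOn_of_symm_jacobian_negDef {S : Set (ι → ℝ)} (hS : Convex ℝ S)
    {g : ι → (ι → ℝ) → ℝ} (hg : ∀ i, Differentiable ℝ (g i))
    (hneg : ∀ z ∈ S, ∀ v : ι → ℝ, v ≠ 0 → ∑ i, ∑ j,
      v i * (fderiv ℝ (g i) z (Pi.single j 1) + fderiv ℝ (g j) z (Pi.single i 1)) * v j < 0) :
    DiagStrictConcaveOn S g := by
  intro x hx y hy hxy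
  set v := y - x
  have hv : v ≠ 0 := sub_ne_zero.mpr hxy.symm
  let h : ℝ → ℝ := fun s => ∑ i, g i (x + s • v) * v i
  have hderiv : ∀ s, HasDerivAt h (∑ i, fderiv ℝ (g i) (x + s • v) v * v i) s := fun s =>
    HasDerivAt.fun_sum fun i _ =>
      (((hg i _).hasFDerivAt.comp_hasDerivAt s
        (((hasDerivAt_id s).smul_const v).const_add x)).mul_const (v i)).congr_deriv
        (by simp)
  obtain ⟨ξ, hξ, hslope⟩ := exists_hasDerivAt_eq_slope h _ zero_lt_one
    (fun s _ => (hderiv s).continuousAt.continuousWithinAt) (fun s _ => hderiv s)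
  have hmem : x + ξ • v ∈ S :=
    hS.add_smul_mem hx (by simpa [v] using hy) (Ioo_subset_Icc_self hξ)
  have hdecrease : h 1 - h 0 < 0 := by
    have hquad := hneg _ hmem v hv
    rw [sum_sum_mul_add_transpose_mul] at hquad
    simp only [← ContinuousLinearMap.apply_eq_sum_mul_apply_single] at hquad
    simp only [sub_zero, div_one] at hslope
    linarith
  simpa [h, v, ← sum_sub_distrib, ← sub_mul] using hdecrease

end Pseudogradient

theorem IsMaxOn.hasDerivAt_mul_sub_nonpos {s : Set ℝ} (hs : Convex ℝ s) {f : ℝ → ℝ}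
    {a f' t : ℝ} (hmax : IsMaxOn f s a) (hf : HasDerivAt f f' a) (ha : a ∈ s) (ht : t ∈ s) :
    f' * (t - a) ≤ 0 := by
  have htangent : t - a ∈ posTangentConeAt s a :=
    sub_mem_posTangentConeAt_of_segment_subset (hs.segment_subset ha ht)
  simpa [mul_comm] using
    hmax.localize.hasFDerivWithinAt_nonpos hf.hasFDerivAt.hasFDerivWithinAt htangent

theorem IsNashEq.sum_mul_sub_nonpos {n : ℕ} {R : Fin n → Set ℝ} {φ : Fin n → (Fin n → ℝ) → ℝ}
    {z : Fin n → ℝ} (hz : IsNashEq R φ z) (hR : ∀ i, Convex ℝ (R i))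
    (hφ : ∀ i, DifferentiableAt ℝ (φ i) z) {r : Fin n → ℝ} (hr : ∀ i, 0 ≤ r i)
    {y : Fin n → ℝ} (hy : ∀ i, y i ∈ R i) :
    ∑ i, r i * fderiv ℝ (φ i) z (Pi.single i 1) * (y i - z i) ≤ 0 := by
  refine sum_nonpos fun i _ => ?_
  have hmax : IsMaxOn (fun t => φ i (update z i t)) (R i) (z i) := fun t ht => by
    simpa using hz.2 i t ht
  have hpartial : HasDerivAt (fun t => φ i (update z i t))
      (fderiv ℝ (φ i) z (Pi.single i 1)) (z i) := by
    exact (hφ i).hasFDerivAt.comp_hasDerivAt_of_eq (z i) (hasDerivAt_update z i (z i))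
      (update_eq_self i z).symm
  rw [mul_assoc]
  exact mul_nonpos_of_nonneg_of_nonpos (hr i)
    (hmax.hasDerivAt_mul_sub_nonpos (hR i) hpartial (hz.1 i) (hy i))

theorem stmt_12_general (n : ℕ) (R : Fin n → Set ℝ) (φ : Fin n → (Fin n → ℝ) → ℝ)
    (hRconv : ∀ i, Convex ℝ (R i))
    (hφ : ∀ i, ContDiff ℝ 2 (φ i))
    (r : Fin n → ℝ) (hr : ∀ i, 0 < r i)
    (hND : ∀ z : Fin n → ℝ, (∀ i, z i ∈ R i) →
      ∀ v : Fin n → ℝ, v ≠ 0 →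
        (∑ i, ∑ j,
          v i * (r i * fderiv ℝ (fun w => fderiv ℝ (φ i) w (Pi.single i 1)) z (Pi.single j 1)
               + r j * fderiv ℝ (fun w => fderiv ℝ (φ j) w (Pi.single j 1)) z (Pi.single i 1))
             * v j) < 0) :
    ∀ z z' : Fin n → ℝ, IsNashEq R φ z → IsNashEq R φ z' → z = z' := by
  intro z z' hz hz'
  have hpartial : ∀ i, Differentiable ℝ (fun w => fderiv ℝ (φ i) w (Pi.single i 1)) := fun i =>
    (((hφ i).fderiv_right (m := 1) (by norm_num)).clm_apply contDiff_const).differentiable (by norm_num)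
  have hφd : ∀ i, Differentiable ℝ (φ i) := fun i => (hφ i).differentiable (by norm_num)
  have hr' : ∀ i, 0 ≤ r i := fun i => (hr i).le
  have hconcave : DiagStrictConcaveOn (univ.pi R)
      (fun i w => r i * fderiv ℝ (φ i) w (Pi.single i 1)) :=
    diagStrictConcaveOn_of_symm_jacobian_negDef (convex_pi fun i _ => hRconv i)
      (fun i => (hpartial i).const_mul (r i)) fun w hw v hv => by
        simpa only [fderiv_const_mul (hpartial _ w), smul_apply, smul_eq_mul]
          using hND w (fun i => hw i (mem_univ i)) v hv
  exact hconcave.eq_of_sum_mul_sub_nonpos (fun i _ => hz.1 i) (fun i _ => hz'.1 i)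
    (hz.sum_mul_sub_nonpos hRconv (fun i => hφd i z) hr' hz'.1)
    (hz'.sum_mul_sub_nonpos hRconv (fun i => hφd i z') hr' hz.1)

theorem stmt_12 (n : ℕ) (R : Fin n → Set ℝ) (φ : Fin n → (Fin n → ℝ) → ℝ)
    (hRc : ∀ i, IsCompact (R i)) (hRconv : ∀ i, Convex ℝ (R i))
    (hφ : ∀ i, ContDiff ℝ 2 (φ i))
    (hconc : ∀ i, ∀ z : Fin n → ℝ,
      ConcaveOn ℝ (R i) (fun t => φ i (Function.update z i t)))
    (r : Fin n → ℝ) (hr : ∀ i, 0 < r i)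
    (hND : ∀ z : Fin n → ℝ, (∀ i, z i ∈ R i) →
      ∀ v : Fin n → ℝ, v ≠ 0 →
        (∑ i, ∑ j,
          v i * (r i * fderiv ℝ (fun w => fderiv ℝ (φ i) w (Pi.single i 1)) z (Pi.single j 1)
               + r j * fderiv ℝ (fun w => fderiv ℝ (φ j) w (Pi.single j 1)) z (Pi.single i 1))
             * v j) < 0) :
    ∀ z z' : Fin n → ℝ, IsNashEq R φ z → IsNashEq R φ z' → z = z' :=
  stmt_12_general n R φ hRconv hφ r hr hND
end
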